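/- Let G be a graph with α(G) > 1. Then G is well-covered if and only if for every vertex v, the localization G_v = G − N_G[v] is well-covered and α(G_v) = α(G) − 1. -/

import Mathlib

/-! A maximal independent set `s` of `G` through a vertex `v` is exactly `v` together with a
maximal independent set of `G_v = G - N_G[v]`, and it has one more element. Hence if `G` is
well-covered, every maximal independent set of every `G_v` has `α(G) - 1` elements, which then
is also `α(G_v)`. Conversely, since `α(G) > 0` every maximal independent set `s` of `G` contains some vertex `v`, and then
`|s| = α(G_v) + 1 = α(G)`. -/

open Classical

noncomputable section

variable {V : Type*}

/-- `s` is an independent set of `G`. -/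
def IndepSet (G : SimpleGraph V) (s : Set V) : Prop :=
  ∀ ⦃a⦄, a ∈ s → ∀ ⦃b⦄, b ∈ s → ¬ G.Adj a b

/-- The independence number `α(G)`. -/
def alphaNum [Fintype V] (G : SimpleGraph V) : ℕ :=
  sSup {n | ∃ s : Set V, IndepSet G s ∧ s.ncard = n}

/-- `s` is a maximal independent set of `G`. -/
def MaximalIndep (G : SimpleGraph V) (s : Set V) : Prop :=
  IndepSet G s ∧ ∀ t : Set V, IndepSet G t → s ⊆ t → s = t

/-- `G` is well-covered: all maximal independent sets have cardinality `α(G)`. -/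
def WellCovered [Fintype V] (G : SimpleGraph V) : Prop :=
  ∀ s : Set V, MaximalIndep G s → s.ncard = alphaNum G

/-- The open neighborhood `N_G(S)` of a set of vertices. -/
def openNbhd (G : SimpleGraph V) (S : Set V) : Set V :=
  {v | v ∉ S ∧ ∃ u ∈ S, G.Adj u v}

/-- The closed neighborhood `N_G[S]`. -/
def closedNbhd (G : SimpleGraph V) (S : Set V) : Set V :=
  S ∪ openNbhd G S

/-- The vertex set of the localization `G_S = G - N_G[S]`. -/
def localSet (G : SimpleGraph V) (S : Set V) : Set V :=
  (closedNbhd G S)ᶜ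

/-- `G` belongs to the class `W_p`. -/
def Wp (p : ℕ) [Fintype V] (G : SimpleGraph V) : Prop :=
  p ≤ Fintype.card V ∧
    ∀ A : Fin p → Set V,
      (∀ i, IndepSet G (A i)) →
      (∀ i j, i ≠ j → Disjoint (A i) (A j)) →
      ∃ S : Fin p → Set V,
        (∀ i j, i ≠ j → Disjoint (S i) (S j)) ∧
        (∀ i, IndepSet G (S i) ∧ (S i).ncard = alphaNum G) ∧
        (∀ i, A i ⊆ S i)

/-- `G` is `α`-critical: deleting any edge increases the independence number. -/
def AlphaCritical [Fintype V] (G : SimpleGraph V) : Prop :=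
  ∀ a b : V, G.Adj a b → alphaNum G < alphaNum (G.deleteEdges {s(a, b)})

/-- The vertex set of `G_{ab} = G - (N_G(a) ∪ N_G(b))`. -/
def edgeLocalSet (G : SimpleGraph V) (a b : V) : Set V :=
  (G.neighborSet a ∪ G.neighborSet b)ᶜ

section Independence

variable {G : SimpleGraph V} {s t : Set V}

theorem IndepSet.mono (ht : IndepSet G t) (hst : s ⊆ t) : IndepSet G s :=
  fun _ ha _ hb => ht (hst ha) (hst hb)

theorem indepSet_induce_iff {W : Set V} {s' : Set W} :
    IndepSet (G.induce W) s' ↔ IndepSet G (Subtype.val '' s') := by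
  constructor
  · rintro hs' _ ⟨a, ha, rfl⟩ _ ⟨b, hb, rfl⟩
    exact hs' ha hb
  · intro hs a ha b hb
    exact hs ⟨a, ha, rfl⟩ ⟨b, hb, rfl⟩

theorem IndepSet.preimage_val (hs : IndepSet G s) (W : Set V) :
    IndepSet (G.induce W) (Subtype.val ⁻¹' s) :=
  indepSet_induce_iff.mpr (hs.mono (Set.image_preimage_subset _ _))

variable [Fintype V]

theorem bddAbove_indepSet_ncard (G : SimpleGraph V) :
    BddAbove {n | ∃ s : Set V, IndepSet G s ∧ s.ncard = n} :=
  ⟨Nat.card V, by rintro _ ⟨s, -, rfl⟩; exact Set.ncard_le_card s⟩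

theorem IndepSet.ncard_le_alphaNum (hs : IndepSet G s) : s.ncard ≤ alphaNum G :=
  le_csSup (bddAbove_indepSet_ncard G) ⟨s, hs, rfl⟩

theorem exists_indepSet_ncard_eq_alphaNum (G : SimpleGraph V) :
    ∃ s : Set V, IndepSet G s ∧ s.ncard = alphaNum G := by
  refine Nat.sSup_mem ?_ (bddAbove_indepSet_ncard G)
  exact ⟨0, ∅, fun _ ha => absurd ha (Set.notMem_empty _), Set.ncard_empty V⟩

theorem IndepSet.exists_maximalIndep_superset (hs : IndepSet G s) :
    ∃ t, MaximalIndep G t ∧ s ⊆ t := by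
  obtain ⟨t, hst, ht, htmax⟩ := Finite.exists_le_maximal (p := IndepSet G) hs
  exact ⟨t, ⟨ht, fun u hu htu => le_antisymm htu (htmax hu htu)⟩, hst⟩

theorem MaximalIndep.nonempty (hs : MaximalIndep G s) (hα : 0 < alphaNum G) : s.Nonempty := by
  rw [Set.nonempty_iff_ne_empty]
  rintro rfl
  obtain ⟨t, ht, htα⟩ := exists_indepSet_ncard_eq_alphaNum G
  rw [← hs.2 t ht (Set.empty_subset t), Set.ncard_empty] at htα
  omega

theorem wellCovered_and_alphaNum_eq_of_forall_maximalIndep {k : ℕ}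
    (hk : ∀ s, MaximalIndep G s → s.ncard = k) : WellCovered G ∧ alphaNum G = k := by
  obtain ⟨t, ht, htα⟩ := exists_indepSet_ncard_eq_alphaNum G
  obtain ⟨u, hu, htu⟩ := ht.exists_maximalIndep_superset
  have hα : alphaNum G = k := by
    refine le_antisymm ?_ ((hk u hu).symm.le.trans hu.1.ncard_le_alphaNum)
    calc alphaNum G = t.ncard := htα.symm
      _ ≤ u.ncard := Set.ncard_le_ncard htu
      _ = k := hk u hu
  exact ⟨fun s hs => (hk s hs).trans hα.symm, hα⟩

end Independence

section Localization

variable {G : SimpleGraph V} {v : V} {s : Set V}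

theorem mem_localSet_singleton {w : V} : w ∈ localSet G {v} ↔ w ≠ v ∧ ¬ G.Adj v w := by
  simp only [localSet, closedNbhd, openNbhd, Set.mem_compl_iff, Set.mem_union,
    Set.mem_singleton_iff, Set.mem_ofPred_eq, exists_eq_left]
  tauto

theorem IndepSet.insert_image_val {s' : Set (localSet G {v})}
    (hs' : IndepSet (G.induce (localSet G {v})) s') :
    IndepSet G (insert v (Subtype.val '' s')) := by
  have hadj : ∀ w ∈ Subtype.val '' s', ¬ G.Adj v w := by
    rintro _ ⟨w, -, rfl⟩
    exact (mem_localSet_singleton.mp w.2).2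
  rintro a (rfl | ha) b (rfl | hb) hab
  · exact G.irrefl hab
  · exact hadj b hb hab
  · exact hadj a ha hab.symm
  · exact indepSet_induce_iff.mp hs' ha hb hab

theorem IndepSet.insert_image_preimage_val_localSet (hs : IndepSet G s) (hv : v ∈ s) :
    insert v (Subtype.val '' (Subtype.val ⁻¹' s : Set (localSet G {v}))) = s := by
  rw [Subtype.image_preimage_coe]
  ext w
  by_cases hwv : w = v
  · simp [hwv, hv]
  · simp only [Set.mem_insert_iff, hwv, false_or, Set.mem_inter_iff, mem_localSet_singleton]
    exact ⟨fun h => h.2, fun hw => ⟨⟨hwv, hs hv hw⟩, hw⟩⟩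

theorem MaximalIndep.insert_image_val {s' : Set (localSet G {v})}
    (hs' : MaximalIndep (G.induce (localSet G {v})) s') :
    MaximalIndep G (insert v (Subtype.val '' s')) := by
  refine ⟨hs'.1.insert_image_val, fun t ht hst => ?_⟩
  have hvt : v ∈ t := hst (Set.mem_insert v _)
  have hs't : s' ⊆ Subtype.val ⁻¹' t := fun w hw => hst (Set.mem_insert_of_mem v ⟨w, hw, rfl⟩)
  rw [hs'.2 _ (ht.preimage_val _) hs't, ht.insert_image_preimage_val_localSet hvt]

theorem MaximalIndep.preimage_val_localSet (hs : MaximalIndep G s) (hv : v ∈ s) :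
    MaximalIndep (G.induce (localSet G {v})) (Subtype.val ⁻¹' s) := by
  refine ⟨hs.1.preimage_val _, fun t' ht' hst' => ?_⟩
  have hs_sub : s ⊆ insert v (Subtype.val '' t') := by
    rw [← hs.1.insert_image_preimage_val_localSet hv]
    exact Set.insert_subset_insert (Set.image_mono hst')
  have hs_eq := hs.2 _ ht'.insert_image_val hs_sub
  refine le_antisymm hst' fun w hw => ?_
  rw [Set.mem_preimage, hs_eq]
  exact Set.mem_insert_of_mem v ⟨w, hw, rfl⟩

theorem ncard_insert_image_val_localSet [Finite V] (s' : Set (localSet G {v})) :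
    (insert v (Subtype.val '' s')).ncard = s'.ncard + 1 := by
  have hv : v ∉ Subtype.val '' s' := by
    rintro ⟨w, -, hwv⟩
    exact (mem_localSet_singleton.mp w.2).1 hwv
  rw [Set.ncard_insert_of_notMem hv, Set.ncard_image_of_injective _ Subtype.val_injective]

end Localization

theorem stmt5 [Fintype V] (G : SimpleGraph V) (h : 1 < alphaNum G) :
    WellCovered G ↔
      ∀ v : V, WellCovered (G.induce (localSet G {v})) ∧
        alphaNum (G.induce (localSet G {v})) = alphaNum G - 1 := by
  constructor
  · intro hG v
    refine wellCovered_and_alphaNum_eq_of_forall_maximalIndep fun s' hs' => ?_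
    have hcard := hG _ hs'.insert_image_val
    rw [ncard_insert_image_val_localSet] at hcard
    omega
  · intro hloc s hs
    obtain ⟨v, hv⟩ := hs.nonempty (by omega)
    obtain ⟨hWv, hαv⟩ := hloc v
    rw [← hs.1.insert_image_preimage_val_localSet hv, ncard_insert_image_val_localSet,
      hWv _ (hs.preimage_val_localSet hv), hαv]
    omega
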